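/- Suppose λ = 0. Let (T, Y) be a mild solution of the wildfire system on [0, t*] with bounded initial data (T_0, Y_0), Y_0 ≥ 0. Then for every t ∈ [0, t*]: ‖T(·,t)‖_{L^∞(ℝ^d)} ≤ ‖T_0‖_{L^∞(ℝ^d)} + t ‖Y_0‖_{L^∞(ℝ^d)}; in particular no thermal blow-up occurs in finite time. -/

import Mathlib

open MeasureTheory Real Set Filter ENNReal

noncomputable section

/-- Euclidean space `ℝ^d`. -/
abbrev Rd (d : ℕ) := EuclideanSpace ℝ (Fin d)

/-- The Arrhenius reaction rate: `r(T) = exp(-1/T)` for `T > 0`, `0` otherwise. -/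
noncomputable def rrate (T : ℝ) : ℝ := if 0 < T then Real.exp (-1 / T) else 0

/-- The heat semigroup `e^{tΔ}φ`, given by convolution with the heat kernel
`Φ_t(x) = (4πt)^{-d/2} exp(-|x|²/(4t))` for `t ≠ 0`, and the identity at `t = 0`. -/
noncomputable def heatConv (d : ℕ) (t : ℝ) (φ : Rd d → ℝ) : Rd d → ℝ :=
  if t = 0 then φ
  else fun x => ∫ y : Rd d,
    (4 * Real.pi * t) ^ (-(d : ℝ) / 2) * Real.exp (-‖x - y‖ ^ 2 / (4 * t)) * φ y

/-- The Duhamel representative of the temperature at time `t`: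
`e^{-λt} e^{tΔ} T₀ + ∫₀ᵗ e^{-λ(t-τ)} e^{(t-τ)Δ}[Y(·,τ) r(T(·,τ))] dτ`. -/
noncomputable def duhamelRep (d : ℕ) (lam : ℝ) (T0 : Rd d → ℝ)
    (T Y : Rd d → ℝ → ℝ) (t : ℝ) (x : Rd d) : ℝ :=
  Real.exp (-lam * t) * heatConv d t T0 x
    + ∫ τ in Set.Ioc (0 : ℝ) t,
        Real.exp (-lam * (t - τ)) *
          heatConv d (t - τ) (fun y => Y y τ * rrate (T y τ)) x

/-- Continuity of the curve `t ↦ T(·,t)` into `L^p(ℝ^d)`, on the time set `I`. -/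
def ContinuousIntoLp (d : ℕ) (p : ℝ≥0∞) (I : Set ℝ) (T : Rd d → ℝ → ℝ) : Prop :=
  ∀ t₀ ∈ I, Filter.Tendsto (fun t => eLpNorm (fun x => T x t - T x t₀) p volume)
    (nhdsWithin t₀ I) (nhds 0)

/-- A mild solution `(T, Y)` of the wildfire reaction-diffusion system
`T_t = (Δ - λ)T + Y r(T)`, `Y_t = -β Y r(T)` with data `(T₀, Y₀)`, on the time set `I`:
the temperature satisfies the Duhamel formula (a.e. in `x`) and the fuel satisfies
`Y(x,t) = Y₀(x) exp(-β ∫₀ᵗ r(T(x,σ)) dσ)`, with both curves continuous into `L^∞`. -/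
structure IsMildSolutionOn (d : ℕ) (lam beta : ℝ) (I : Set ℝ)
    (T0 Y0 : Rd d → ℝ) (T Y : Rd d → ℝ → ℝ) : Prop where
  meas_T0 : Measurable T0
  meas_Y0 : Measurable Y0
  bdd_T0 : eLpNorm T0 ⊤ volume < ⊤
  bdd_Y0 : eLpNorm Y0 ⊤ volume < ⊤
  meas_T : ∀ t ∈ I, Measurable fun x => T x t
  meas_Y : ∀ t ∈ I, Measurable fun x => Y x t
  cont_T : ContinuousIntoLp d ⊤ I T
  cont_Y : ContinuousIntoLp d ⊤ I Y
  duhamel : ∀ t ∈ I, (fun x => T x t) =ᵐ[volume] duhamelRep d lam T0 T Y t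
  fuel : ∀ x, ∀ t ∈ I,
    Y x t = Y0 x * Real.exp (-beta * ∫ σ in Set.Ioc (0 : ℝ) t, rrate (T x σ))

/-- The `X_{t*}`-norm: `sup_{t ∈ I} [(1+t)^{d/2} ‖T(·,t)‖_{L^∞} + ‖T(·,t)‖_{L¹}]`. -/
noncomputable def XnormOn (d : ℕ) (I : Set ℝ) (T : Rd d → ℝ → ℝ) : ℝ≥0∞ :=
  ⨆ t ∈ I, (ENNReal.ofReal ((1 + t) ^ ((d : ℝ) / 2)) * eLpNorm (fun x => T x t) ⊤ volume
    + eLpNorm (fun x => T x t) 1 volume)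

end

/-! The heat semigroup is a contraction in `L^∞`, because its kernel is nonnegative with
unit mass. By the fuel formula the source satisfies `0 ≤ Y r(T) ≤ Y ≤ Y₀`, so for `λ = 0`
the Duhamel formula bounds `T(·,t)` by `‖T₀‖_∞ + ∫₀ᵗ ‖Y₀‖_∞ dτ`. -/

lemma rrate_nonneg (s : ℝ) : 0 ≤ rrate s := by
  unfold rrate
  split_ifs
  exacts [(exp_pos _).le, le_rfl]

lemma rrate_le_one (s : ℝ) : rrate s ≤ 1 := by
  unfold rrate
  split_ifs with hs
  exacts [exp_le_one_iff.mpr (div_nonpos_of_nonpos_of_nonneg (by norm_num) hs.le), zero_le_one]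

lemma integrable_exp_neg_mul_sq_norm {V : Type*} [NormedAddCommGroup V] [InnerProductSpace ℝ V]
    [FiniteDimensional ℝ V] [MeasurableSpace V] [BorelSpace V] {b : ℝ} (hb : 0 < b) :
    Integrable fun v : V => exp (-b * ‖v‖ ^ 2) := by
  refine (GaussianFourier.integrable_cexp_neg_mul_sq_norm_add
    (b := (b : ℂ)) (by simpa using hb) 0 (0 : V)).norm.congr (.of_forall fun v => ?_)
  have : -(b : ℂ) * (‖v‖ : ℂ) ^ 2 + 0 * ((inner ℝ (0 : V) v : ℝ) : ℂ)
      = ((-b * ‖v‖ ^ 2 : ℝ) : ℂ) := by push_cast; ring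
  simp only [this, Complex.norm_exp, Complex.ofReal_re]

section HeatKernel

variable {d : ℕ} {t : ℝ}

noncomputable def heatKernel (d : ℕ) (t : ℝ) (v : Rd d) : ℝ :=
  (4 * π * t) ^ (-(d : ℝ) / 2) * exp (-‖v‖ ^ 2 / (4 * t))

lemma heatConv_of_ne_zero (ht : t ≠ 0) (φ : Rd d → ℝ) (x : Rd d) :
    heatConv d t φ x = ∫ y, heatKernel d t (x - y) * φ y := by
  rw [heatConv, if_neg ht]
  rfl

lemma heatKernel_nonneg (ht : 0 ≤ t) (v : Rd d) : 0 ≤ heatKernel d t v :=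
  mul_nonneg (rpow_nonneg (by positivity) _) (exp_pos _).le

lemma heatKernel_eq_exp_neg_mul_sq_norm (v : Rd d) :
    heatKernel d t v = (4 * π * t) ^ (-(d : ℝ) / 2) * exp (-(1 / (4 * t)) * ‖v‖ ^ 2) := by
  rw [heatKernel]
  congr 2
  ring

lemma integrable_heatKernel (ht : 0 < t) : Integrable (heatKernel d t) := by
  simp_rw [funext heatKernel_eq_exp_neg_mul_sq_norm]
  exact (integrable_exp_neg_mul_sq_norm (by positivity)).const_mul _

lemma integral_heatKernel (ht : 0 < t) : ∫ v, heatKernel d t v = 1 := by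
  have h4 : 0 < 4 * π * t := by positivity
  simp_rw [heatKernel_eq_exp_neg_mul_sq_norm]
  rw [integral_const_mul, GaussianFourier.integral_rexp_neg_mul_sq_norm (by positivity),
    finrank_euclideanSpace_fin, show π / (1 / (4 * t)) = 4 * π * t by field_simp,
    ← rpow_add h4, neg_div, neg_add_cancel, Real.rpow_zero]

lemma norm_heatConv_le (ht : 0 < t) {φ : Rd d → ℝ} {C : ℝ} (hφ : ∀ᵐ y, ‖φ y‖ ≤ C)
    (x : Rd d) : ‖heatConv d t φ x‖ ≤ C := by
  have hK : Integrable fun y => heatKernel d t (x - y) :=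
    (integrable_heatKernel ht).comp_sub_left x
  rw [heatConv_of_ne_zero ht.ne']
  calc ‖∫ y, heatKernel d t (x - y) * φ y‖
      ≤ ∫ y, ‖heatKernel d t (x - y) * φ y‖ := norm_integral_le_integral_norm _
    _ ≤ ∫ y, heatKernel d t (x - y) * C := by
        refine integral_mono_of_nonneg (.of_forall fun y => norm_nonneg _) (hK.mul_const C) ?_
        filter_upwards [hφ] with y hy
        rw [norm_mul, norm_of_nonneg (heatKernel_nonneg ht.le _)]
        exact mul_le_mul_of_nonneg_left hy (heatKernel_nonneg ht.le _)
    _ = C := by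
        rw [integral_mul_const, integral_sub_left_eq_self (heatKernel d t),
          integral_heatKernel ht, one_mul]

lemma ae_norm_heatConv_le (ht : 0 ≤ t) {φ : Rd d → ℝ} {C : ℝ} (hφ : ∀ᵐ y, ‖φ y‖ ≤ C) :
    ∀ᵐ x, ‖heatConv d t φ x‖ ≤ C := by
  rcases ht.eq_or_lt with rfl | ht
  · simpa [heatConv] using hφ
  · exact .of_forall (norm_heatConv_le ht hφ)

lemma norm_setIntegral_heatConv_le (ht : 0 ≤ t) {F : ℝ → Rd d → ℝ} {C : ℝ}
    (hF : ∀ τ ∈ Ioo 0 t, ∀ᵐ y, ‖F τ y‖ ≤ C) (x : Rd d) :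
    ‖∫ τ in Ioc 0 t, heatConv d (t - τ) (F τ) x‖ ≤ C * t := by
  rw [← setIntegral_congr_set Ioo_ae_eq_Ioc]
  have := norm_setIntegral_le_of_norm_le_const (μ := volume) measure_Ioo_lt_top
    fun τ (hτ : τ ∈ Ioo 0 t) => norm_heatConv_le (sub_pos.mpr hτ.2) (hF τ hτ) x
  rwa [Real.volume_real_Ioo_of_le ht, sub_zero] at this

end HeatKernel

lemma duhamelRep_zero (d : ℕ) (T0 : Rd d → ℝ) (T Y : Rd d → ℝ → ℝ) (t : ℝ) (x : Rd d) :
    duhamelRep d 0 T0 T Y t x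
      = heatConv d t T0 x
        + ∫ τ in Ioc 0 t, heatConv d (t - τ) (fun y => Y y τ * rrate (T y τ)) x := by
  simp [duhamelRep]

lemma ae_norm_le_toReal_eLpNorm_top {α E : Type*} [MeasurableSpace α] {μ : Measure α}
    [NormedAddCommGroup E] {f : α → E} (hf : eLpNorm f ⊤ μ ≠ ⊤) :
    ∀ᵐ x ∂μ, ‖f x‖ ≤ (eLpNorm f ⊤ μ).toReal := by
  rw [eLpNorm_exponent_top] at hf ⊢
  filter_upwards [enorm_ae_le_eLpNormEssSup f μ] with x hx
  simpa using ENNReal.toReal_mono hf hx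

lemma IsMildSolutionOn.norm_source_le {d : ℕ} {lam beta : ℝ} {I : Set ℝ}
    {T0 Y0 : Rd d → ℝ} {T Y : Rd d → ℝ → ℝ} (hsol : IsMildSolutionOn d lam beta I T0 Y0 T Y)
    (hbeta : 0 ≤ beta) (hY0 : ∀ x, 0 ≤ Y0 x) {τ : ℝ} (hτ : τ ∈ I) (y : Rd d) :
    ‖Y y τ * rrate (T y τ)‖ ≤ Y0 y := by
  have hburn : 0 ≤ ∫ σ in Ioc 0 τ, rrate (T y σ) := integral_nonneg fun σ => rrate_nonneg _
  have hdecay : exp (-beta * ∫ σ in Ioc 0 τ, rrate (T y σ)) ≤ 1 :=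
    exp_le_one_iff.mpr (mul_nonpos_of_nonpos_of_nonneg (neg_nonpos.mpr hbeta) hburn)
  have hY : 0 ≤ Y y τ := hsol.fuel y τ hτ ▸ mul_nonneg (hY0 y) (exp_pos _).le
  rw [norm_of_nonneg (mul_nonneg hY (rrate_nonneg _))]
  calc Y y τ * rrate (T y τ) ≤ Y y τ := mul_le_of_le_one_right hY (rrate_le_one _)
    _ ≤ Y0 y := hsol.fuel y τ hτ ▸ mul_le_of_le_one_right (hY0 y) hdecay

theorem temperature_linfty_bound_lambda_zero_general
    (d : ℕ) (beta : ℝ) (hbeta : 0 ≤ beta)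
    (tstar : ℝ)
    (T0 Y0 : Rd d → ℝ) (T Y : Rd d → ℝ → ℝ)
    (hY0 : ∀ x, 0 ≤ Y0 x)
    (hsol : IsMildSolutionOn d 0 beta (Set.Icc 0 tstar) T0 Y0 T Y) :
    ∀ t ∈ Set.Icc (0 : ℝ) tstar,
      eLpNorm (fun x => T x t) ⊤ volume
        ≤ eLpNorm T0 ⊤ volume + ENNReal.ofReal t * eLpNorm Y0 ⊤ volume := by
  intro t ht
  set C0 := (eLpNorm T0 ⊤ volume).toReal
  set C1 := (eLpNorm Y0 ⊤ volume).toReal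
  have hsource : ∀ τ ∈ Ioo 0 t, ∀ᵐ y, ‖Y y τ * rrate (T y τ)‖ ≤ C1 := fun τ hτ =>
    (ae_norm_le_toReal_eLpNorm_top hsol.bdd_Y0.ne).mono fun y hy =>
      (hsol.norm_source_le hbeta hY0 ⟨hτ.1.le, hτ.2.le.trans ht.2⟩ y).trans
        ((le_abs_self _).trans hy)
  have hduhamel : ∀ᵐ x, ‖duhamelRep d 0 T0 T Y t x‖ ≤ C0 + C1 * t := by
    filter_upwards [ae_norm_heatConv_le ht.1 (ae_norm_le_toReal_eLpNorm_top hsol.bdd_T0.ne)]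
      with x hx
    rw [duhamelRep_zero]
    exact (norm_add_le _ _).trans (add_le_add hx (norm_setIntegral_heatConv_le ht.1 hsource x))
  calc eLpNorm (fun x => T x t) ⊤ volume = eLpNorm (duhamelRep d 0 T0 T Y t) ⊤ volume :=
        eLpNorm_congr_ae (hsol.duhamel t ht)
    _ ≤ ENNReal.ofReal (C0 + C1 * t) := by
        rw [eLpNorm_exponent_top]
        exact eLpNormEssSup_le_of_ae_bound hduhamel
    _ = eLpNorm T0 ⊤ volume + ENNReal.ofReal t * eLpNorm Y0 ⊤ volume := by
        rw [ofReal_add toReal_nonneg (mul_nonneg toReal_nonneg ht.1), ofReal_mul toReal_nonneg,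
          ofReal_toReal hsol.bdd_T0.ne, ofReal_toReal hsol.bdd_Y0.ne, mul_comm]

/-- For `λ = 0` and a mild solution on `[0,t*]` with bounded data and
`Y₀ ≥ 0`: `‖T(·,t)‖_{L^∞} ≤ ‖T₀‖_{L^∞} + t ‖Y₀‖_{L^∞}` for all `t ∈ [0,t*]`;
in particular no thermal blow-up occurs in finite time. -/
theorem temperature_linfty_bound_lambda_zero
    (d : ℕ) (hd : 1 ≤ d) (beta : ℝ) (hbeta : 0 ≤ beta)
    (tstar : ℝ) (htstar : 0 < tstar)
    (T0 Y0 : Rd d → ℝ) (T Y : Rd d → ℝ → ℝ)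
    (hY0 : ∀ x, 0 ≤ Y0 x)
    (hsol : IsMildSolutionOn d 0 beta (Set.Icc 0 tstar) T0 Y0 T Y) :
    ∀ t ∈ Set.Icc (0 : ℝ) tstar,
      eLpNorm (fun x => T x t) ⊤ volume
        ≤ eLpNorm T0 ⊤ volume + ENNReal.ofReal t * eLpNorm Y0 ⊤ volume :=
  temperature_linfty_bound_lambda_zero_general d beta hbeta tstar T0 Y0 T Y hY0 hsol
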